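/- The softmax function σ: ℝ^d → ℝ^d defined by σ(u)_i = exp(u_i)/Σ_k exp(u_k) is 1-Lipschitz with respect to the Euclidean norm: for all u, v ∈ ℝ^d, ‖σ(u) − σ(v)‖ ≤ ‖u − v‖. -/

import Mathlib

/-!
At `u` the Jacobian of softmax is `diag p - p pᵀ` with `p = σ(u)`, which sends `h` to
`(p i * (h i - m))ᵢ` where `m = ∑ p k * h k`. Since `0 ≤ p i ≤ 1`, its squared norm is at most
`∑ p i * (h i - m) ^ 2`, the variance of `h` under `p`, which is at most the second moment
`∑ p i * h i ^ 2 ≤ ‖h‖ ^ 2`. The mean value inequality then makes softmax 1-Lipschitz.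
-/

/-- The softmax map on `ℝ^d`. -/
noncomputable def softmax {d : ℕ} (u : EuclideanSpace ℝ (Fin d)) :
    EuclideanSpace ℝ (Fin d) :=
  WithLp.toLp 2 (fun i => Real.exp (u i) / ∑ k, Real.exp (u k))

open Matrix

section Jacobian

variable {ι : Type*} [Fintype ι]

lemma sum_sq_mul_sub_dotProduct_le_sum_sq (p h : ι → ℝ) (hp : ∀ i, 0 ≤ p i)
    (hp1 : ∑ i, p i ≤ 1) : ∑ i, (p i * (h i - p ⬝ᵥ h)) ^ 2 ≤ ∑ i, h i ^ 2 := by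
  set m := p ⬝ᵥ h
  have hp_le_one : ∀ i, p i ≤ 1 := fun i =>
    (Finset.single_le_sum (fun k _ => hp k) (Finset.mem_univ i)).trans hp1
  have variance_le : ∑ i, p i * (h i - m) ^ 2 ≤ ∑ i, p i * h i ^ 2 := by
    have hm : m = ∑ i, p i * h i := rfl
    have expand : ∑ i, p i * (h i - m) ^ 2 = ∑ i, p i * h i ^ 2 - 2 * m ^ 2 + m ^ 2 * ∑ i, p i := by
      simp only [fun i => show p i * (h i - m) ^ 2 = p i * h i ^ 2 - 2 * m * (p i * h i) + m ^ 2 * p i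
        by ring, Finset.sum_add_distrib, Finset.sum_sub_distrib, ← Finset.mul_sum, ← hm]
      ring
    rw [expand]
    linarith [mul_le_of_le_one_right (sq_nonneg m) hp1, sq_nonneg m]
  calc ∑ i, (p i * (h i - m)) ^ 2
      ≤ ∑ i, p i * (h i - m) ^ 2 := Finset.sum_le_sum fun i _ => by
        rw [mul_pow]; gcongr; nlinarith [hp i, hp_le_one i]
    _ ≤ ∑ i, p i * h i ^ 2 := variance_le
    _ ≤ ∑ i, h i ^ 2 := Finset.sum_le_sum fun i _ =>
        mul_le_of_le_one_left (sq_nonneg _) (hp_le_one i)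

variable [DecidableEq ι]

noncomputable def softmaxJacobian (p : ι → ℝ) : EuclideanSpace ℝ ι →L[ℝ] EuclideanSpace ℝ ι :=
  toEuclideanCLM (𝕜 := ℝ) (diagonal p - vecMulVec p p)

lemma softmaxJacobian_apply (p : ι → ℝ) (h : EuclideanSpace ℝ ι) (i : ι) :
    softmaxJacobian p h i = p i * (h i - p ⬝ᵥ h) := by
  simp only [softmaxJacobian, map_sub, _root_.sub_apply, PiLp.sub_apply, ofLp_toEuclideanCLM,
    mulVec_diagonal, vecMulVec_mulVec, Pi.smul_apply, MulOpposite.smul_eq_mul_unop,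
    MulOpposite.unop_op]
  ring

lemma norm_softmaxJacobian_le_one (p : ι → ℝ) (hp : ∀ i, 0 ≤ p i) (hp1 : ∑ i, p i ≤ 1) :
    ‖softmaxJacobian p‖ ≤ 1 := by
  refine ContinuousLinearMap.opNorm_le_bound _ zero_le_one fun h => ?_
  rw [one_mul, EuclideanSpace.norm_eq, EuclideanSpace.norm_eq]
  refine Real.sqrt_le_sqrt ?_
  simpa only [softmaxJacobian_apply, Real.norm_eq_abs, sq_abs]
    using sum_sq_mul_sub_dotProduct_le_sum_sq p h hp hp1

end Jacobian

section Softmax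

variable {d : ℕ}

lemma softmax_nonneg (u : EuclideanSpace ℝ (Fin d)) (i : Fin d) : 0 ≤ softmax u i := by
  unfold softmax
  positivity

-- Only `≤ 1`: for `d = 0` the sum is empty.
lemma sum_softmax_le_one (u : EuclideanSpace ℝ (Fin d)) : ∑ i, softmax u i ≤ 1 := by
  simp only [softmax, ← Finset.sum_div]
  exact div_self_le_one _

lemma hasFDerivAt_softmax (u : EuclideanSpace ℝ (Fin d)) :
    HasFDerivAt softmax (softmaxJacobian (softmax u).ofLp) u := by
  rw [← hasFDerivWithinAt_univ, hasFDerivWithinAt_euclidean]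
  intro i
  have hS : 0 < ∑ k, Real.exp (u k) :=
    Finset.sum_pos (fun k _ => Real.exp_pos _) ⟨i, Finset.mem_univ i⟩
  have hexp : ∀ k, HasFDerivAt (fun x : EuclideanSpace ℝ (Fin d) => Real.exp (x k))
      (Real.exp (u k) • PiLp.proj 2 _ k) u := fun k => (PiLp.hasFDerivAt_apply 2 u k).exp
  have hquot := (hexp i).mul ((hasDerivAt_inv hS.ne').comp_hasFDerivAt u
    (HasFDerivAt.fun_sum fun k _ => hexp k))
  refine (hquot.congr_fderiv ?_).hasFDerivWithinAt
  ext h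
  simp only [neg_smul, smul_neg, Function.comp_apply, _root_.add_apply,
    _root_.neg_apply, _root_.smul_apply, _root_.sum_apply,
    PiLp.proj_apply, smul_eq_mul, softmax, ContinuousLinearMap.comp_apply, softmaxJacobian_apply,
    dotProduct, div_mul_eq_mul_div, ← Finset.sum_div]
  field_simp
  ring

end Softmax

theorem stmt8 {d : ℕ} (u v : EuclideanSpace ℝ (Fin d)) :
    ‖softmax u - softmax v‖ ≤ ‖u - v‖ := by
  simpa using convex_univ.norm_image_sub_le_of_norm_hasFDerivWithin_le
    (fun x _ => (hasFDerivAt_softmax x).hasFDerivWithinAt)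
    (fun x _ => norm_softmaxJacobian_le_one _ (softmax_nonneg x) (sum_softmax_le_one x))
    (Set.mem_univ v) (Set.mem_univ u)
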